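/- Expansion lemma: for any reverse subtableau R of shape μ (boxes possibly empty, entries in {1,...,d}) and ξ ∈ ℕ^d, (x|y)^ξ · (x|y)^R = Σ_{B} c_{ξ+1,B} · (x|y)^{ξ+ω(B^u)}, where the sum is over reverse barred subtableaux B whose unbarring equals R. -/

import Mathlib

open scoped Classical
open MvPolynomial

noncomputable section

namespace EqLR

/-- Ambient polynomial ring `ℂ[x_1,…,x_d ; y_i (i ∈ ℤ)]`.
The variables `x_j` are indexed by `Fin d` (so `x_{j+1} = X (Sum.inl j)`), and the
variables `y_i` are indexed by `ℤ` (only positive indices actually occur). -/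
abbrev P (d : ℕ) := MvPolynomial (Fin d ⊕ ℤ) ℂ

/-- The variable `y_i`. -/
def yI (d : ℕ) (i : ℤ) : P d := X (Sum.inr i)

/-- The variable `x_v` for a value `v ∈ {1,…,d}` (junk value `0` otherwise). -/
def xv (d : ℕ) (v : ℕ) : P d :=
  if h : v - 1 < d then X (Sum.inl ⟨v - 1, h⟩) else 0

/-- The component `ξ_v` of a vector `ξ ∈ ℕ^d`, for a (1-based) value `v ∈ {1,…,d}`. -/
def vecAt {d : ℕ} (ξ : Fin d → ℕ) (v : ℕ) : ℕ :=
  if h : v - 1 < d then ξ ⟨v - 1, h⟩ else 0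

/-- `μ ∈ ℕ^d` is a partition:  `μ_1 ≥ μ_2 ≥ … ≥ μ_d`. -/
def IsPartitionVec {d : ℕ} (μ : Fin d → ℕ) : Prop :=
  ∀ i j : Fin d, i ≤ j → μ j ≤ μ i

/-- `|μ| = μ_1 + ⋯ + μ_d`. -/
def wt {d : ℕ} (μ : Fin d → ℕ) : ℕ := ∑ i, μ i

/-- `ρ = (d-1, d-2, …, 0)`. -/
def rho (d : ℕ) : Fin d → ℕ := fun i => d - 1 - (i : ℕ)

/-- Cells `(r, c)` (both 0-based) of the Young/reverse Young diagram whose row `r` has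
length `μ_{r+1}`.  For the reverse diagram, rows are numbered bottom-to-top and columns
right-to-left; for the ordinary Young diagram, top-to-bottom and left-to-right. -/
def cells (d : ℕ) (μ : Fin d → ℕ) : Finset (ℕ × ℕ) :=
  (Finset.range d ×ˢ Finset.range (Finset.univ.sup μ + 1)).filter
    fun rc => ∃ h : rc.1 < d, rc.2 < μ ⟨rc.1, h⟩

/-- In the column reading word of a *reverse* diagram (columns right-to-left, i.e. in
increasing 0-based column index, each column read top-to-bottom, i.e. in decreasing
0-based row index), the cell `b` is read strictly before the cell `a`. -/
def revBefore (a b : ℕ × ℕ) : Prop := b.2 < a.2 ∨ (b.2 = a.2 ∧ a.1 < b.1)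

/-- In the column reading word of an ordinary Young diagram (rightmost column first,
each column read top-to-bottom), the cell `b` is read strictly before the cell `a`. -/
def youngBefore (a b : ℕ × ℕ) : Prop := a.2 < b.2 ∨ (b.2 = a.2 ∧ b.1 < a.1)

/-- A reverse tableau of shape `μ`: entries in `{1,…,d}`, weakly increasing along rows
(left to right) and strictly increasing down columns (top to bottom). -/
structure RevTableau (d : ℕ) (μ : Fin d → ℕ) where
  val : ℕ × ℕ → ℕ
  mem : ∀ a ∈ cells d μ, 1 ≤ val a ∧ val a ≤ d
  zero : ∀ a ∉ cells d μ, val a = 0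
  row : ∀ r c : ℕ, (r, c + 1) ∈ cells d μ → val (r, c + 1) ≤ val (r, c)
  col : ∀ r c : ℕ, (r + 1, c) ∈ cells d μ → val (r + 1, c) < val (r, c)

/-- The factor `x_v - y_{(d+1-v) + c(a) - r(a)}` attached to an entry of value `v` in
the cell `a` of the reverse diagram (`c(a) = a.2 + 1`, `r(a) = a.1 + 1`, 1-based). -/
def factor (d : ℕ) (v : ℕ) (a : ℕ × ℕ) : P d :=
  xv d v - yI d ((d : ℤ) + 1 - (v : ℤ) + (a.2 : ℤ) - (a.1 : ℤ))

/-- The factorial Schur function `s_μ(x|y) = Σ_R (x|y)^R`. -/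
def fSchur (d : ℕ) (μ : Fin d → ℕ) : P d :=
  ∑ᶠ R : RevTableau d μ, ∏ a ∈ cells d μ, factor d (R.val a) a

/-- The ordinary Schur function `s_μ(x) = Σ_R x^R`. -/
def schurX (d : ℕ) (μ : Fin d → ℕ) : P d :=
  ∑ᶠ R : RevTableau d μ, ∏ a ∈ cells d μ, xv d (R.val a)

/-- The subalgebra `ℂ[y]` of polynomials in the `y` variables only. -/
def ySub (d : ℕ) : Subalgebra ℂ (P d) :=
  Algebra.adjoin ℂ (Set.range fun i : ℤ => yI d i)

/-- `p` is symmetric in the `x` variables. -/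
def SymmX {d : ℕ} (p : P d) : Prop :=
  ∀ σ : Equiv.Perm (Fin d), rename (⇑(Equiv.sumCongr σ (Equiv.refl ℤ))) p = p

/-- The falling factorial power `(x_j | y)^k = (x_j - y_1)⋯(x_j - y_k)`. -/
def ffPow (d : ℕ) (j : Fin d) (k : ℕ) : P d :=
  ∏ i ∈ Finset.range k, (X (Sum.inl j) - yI d ((i : ℤ) + 1))

/-- `(x|y)^ξ = (x_1|y)^{ξ_1} ⋯ (x_d|y)^{ξ_d}`. -/
def xyPow (d : ℕ) (ξ : Fin d → ℕ) : P d := ∏ j : Fin d, ffPow d j (ξ j)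

/-- The alternant `a_ξ(x|y) = det[(x_j|y)^{ξ_i}]`. -/
def aDet (d : ℕ) (ξ : Fin d → ℕ) : P d :=
  Matrix.det (Matrix.of fun i j : Fin d => ffPow d j (ξ i))

/-! ### Skew barred tableaux of shape `λ*μ` -/

/-- A skew barred tableau of shape `λ*μ`: the Young diagram `λ` (placed above and to
the right of the reverse diagram `μ`) is filled with values in `{1,…,d}` (field `top`),
the reverse diagram `μ` is filled with values in `{1,…,d}` (field `bot`), some of whose
cells may be barred (field `barred`); values weakly increase along rows left-to-right
and strictly increase down columns, ignoring bars. -/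
structure SkewBarredTableau (d : ℕ) (lam mu : Fin d → ℕ) where
  top : ℕ × ℕ → ℕ
  bot : ℕ × ℕ → ℕ
  barred : ℕ × ℕ → Prop
  top_mem : ∀ a ∈ cells d lam, 1 ≤ top a ∧ top a ≤ d
  top_zero : ∀ a ∉ cells d lam, top a = 0
  bot_mem : ∀ a ∈ cells d mu, 1 ≤ bot a ∧ bot a ≤ d
  bot_zero : ∀ a ∉ cells d mu, bot a = 0
  barred_sub : ∀ a, barred a → a ∈ cells d mu
  top_row : ∀ r c : ℕ, (r, c + 1) ∈ cells d lam → top (r, c) ≤ top (r, c + 1)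
  top_col : ∀ r c : ℕ, (r + 1, c) ∈ cells d lam → top (r, c) < top (r + 1, c)
  bot_row : ∀ r c : ℕ, (r, c + 1) ∈ cells d mu → bot (r, c + 1) ≤ bot (r, c)
  bot_col : ∀ r c : ℕ, (r + 1, c) ∈ cells d mu → bot (r + 1, c) < bot (r, c)

namespace SkewBarredTableau

variable {d : ℕ} {lam mu : Fin d → ℕ}

/-- `ω(L^u_{<a})_k`: the number of `k`'s among the unbarred entries of `L` read strictly
before the `μ`-cell `a` in the unbarred column word (all of `λ` is read before `μ`). -/
def countBefore (L : SkewBarredTableau d lam mu) (a : ℕ × ℕ) (k : ℕ) : ℕ :=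
  ((cells d lam).filter fun b => L.top b = k).card +
  ((cells d mu).filter fun b => ¬ L.barred b ∧ L.bot b = k ∧ revBefore a b).card

/-- `ω(L^u_{≤a})_k`: as `countBefore`, but the entry of `a` itself is also counted when
`a` is unbarred. -/
def countUpTo (L : SkewBarredTableau d lam mu) (a : ℕ × ℕ) (k : ℕ) : ℕ :=
  ((cells d lam).filter fun b => L.top b = k).card +
  ((cells d mu).filter fun b => ¬ L.barred b ∧ L.bot b = k ∧ (revBefore a b ∨ b = a)).card

/-- Prefix content within the `λ`-part of the word. -/
def topCountUpTo (L : SkewBarredTableau d lam mu) (a : ℕ × ℕ) (k : ℕ) : ℕ :=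
  ((cells d lam).filter fun b => L.top b = k ∧ (youngBefore a b ∨ b = a)).card

/-- `ω(L^u)_k`: total content of the unbarred column word of `L`. -/
def content (L : SkewBarredTableau d lam mu) (k : ℕ) : ℕ :=
  ((cells d lam).filter fun b => L.top b = k).card +
  ((cells d mu).filter fun b => ¬ L.barred b ∧ L.bot b = k).card

/-- The unbarred column word of `L` is Yamanouchi: every prefix contains at least as
many `k`'s as `(k+1)`'s, for every `k ≥ 1`. -/
def Yamanouchi (L : SkewBarredTableau d lam mu) : Prop :=
  (∀ a ∈ cells d lam, ∀ k : ℕ, 1 ≤ k → L.topCountUpTo a (k + 1) ≤ L.topCountUpTo a k) ∧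
  (∀ a ∈ cells d mu, ¬ L.barred a → ∀ k : ℕ, 1 ≤ k →
      L.countUpTo a (k + 1) ≤ L.countUpTo a k)

/-- `L` is an equivariant Littlewood–Richardson skew tableau of shape `λ*μ` and unbarred
content `ν`. -/
def IsLR (L : SkewBarredTableau d lam mu) (ν : Fin d → ℕ) : Prop :=
  L.Yamanouchi ∧ ∀ i : Fin d, L.content ((i : ℕ) + 1) = ν i

/-- The index `|a|' + ω(L^u_{<a})_{|a|}` of the first `y` in the factor of `c_L` at a
barred cell `a`. -/
def eIdx (L : SkewBarredTableau d lam mu) (a : ℕ × ℕ) : ℤ :=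
  ((d : ℤ) + 1 - (L.bot a : ℤ)) + (L.countBefore a (L.bot a) : ℤ)

/-- The index `|a|' + c(a) - r(a)` of the second `y` in the factor of `c_L` at a barred
cell `a`. -/
def fIdx (L : SkewBarredTableau d lam mu) (a : ℕ × ℕ) : ℤ :=
  ((d : ℤ) + 1 - (L.bot a : ℤ)) + (a.2 : ℤ) - (a.1 : ℤ)

/-- The weight `c_L = ∏_{a barred} (y_{|a|'+ω(L^u_{<a})_{|a|}} - y_{|a|'+c(a)-r(a)})`. -/
def cWt (L : SkewBarredTableau d lam mu) : P d :=
  ∏ a ∈ (cells d mu).filter (fun a => L.barred a), (yI d (L.eIdx a) - yI d (L.fIdx a))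

/-- `Δ(a) = ω(L^u_{≤a})_{|a|} - c(a) + r(a)`. -/
def Δ (L : SkewBarredTableau d lam mu) (a : ℕ × ℕ) : ℤ :=
  (L.countUpTo a (L.bot a) : ℤ) - ((a.2 : ℤ) + 1) + ((a.1 : ℤ) + 1)

end SkewBarredTableau

/-! ### Reverse barred tableaux -/

/-- A reverse barred tableau of shape `μ`. -/
structure RevBarredTableau (d : ℕ) (μ : Fin d → ℕ) where
  val : ℕ × ℕ → ℕ
  barred : ℕ × ℕ → Prop
  mem : ∀ a ∈ cells d μ, 1 ≤ val a ∧ val a ≤ d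
  zero : ∀ a ∉ cells d μ, val a = 0
  barred_sub : ∀ a, barred a → a ∈ cells d μ
  row : ∀ r c : ℕ, (r, c + 1) ∈ cells d μ → val (r, c + 1) ≤ val (r, c)
  col : ∀ r c : ℕ, (r + 1, c) ∈ cells d μ → val (r + 1, c) < val (r, c)

namespace RevBarredTableau

variable {d : ℕ} {μ : Fin d → ℕ}

/-- `ω(B^u_{<a})_k`. -/
def countBefore (B : RevBarredTableau d μ) (a : ℕ × ℕ) (k : ℕ) : ℕ :=
  ((cells d μ).filter fun b => ¬ B.barred b ∧ B.val b = k ∧ revBefore a b).card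

/-- `ω(B^u_{≤a})_k` (including `a` itself when unbarred). -/
def countUpTo (B : RevBarredTableau d μ) (a : ℕ × ℕ) (k : ℕ) : ℕ :=
  ((cells d μ).filter fun b => ¬ B.barred b ∧ B.val b = k ∧ (revBefore a b ∨ b = a)).card

/-- `ω(B^u)_k`. -/
def content (B : RevBarredTableau d μ) (k : ℕ) : ℕ :=
  ((cells d μ).filter fun b => ¬ B.barred b ∧ B.val b = k).card

/-- `e_{ξ,B}(a) = (ξ + ω(B^u_{<a}))_{|a|}`. -/
def eIdx (B : RevBarredTableau d μ) (ξ : Fin d → ℕ) (a : ℕ × ℕ) : ℤ :=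
  (vecAt ξ (B.val a) : ℤ) + (B.countBefore a (B.val a) : ℤ)

/-- `f_B(a) = |a|' + c(a) - r(a)`. -/
def fIdx (B : RevBarredTableau d μ) (a : ℕ × ℕ) : ℤ :=
  ((d : ℤ) + 1 - (B.val a : ℤ)) + (a.2 : ℤ) - (a.1 : ℤ)

/-- `c_{ξ,B} = ∏_{a barred} (y_{e_{ξ,B}(a)} - y_{f_B(a)})`. -/
def cXi (B : RevBarredTableau d μ) (ξ : Fin d → ℕ) : P d :=
  ∏ a ∈ (cells d μ).filter (fun a => B.barred a), (yI d (B.eIdx ξ a) - yI d (B.fIdx a))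

/-- The unbarred column word of `λ*B` is Yamanouchi (the `λ`-part is the canonical
filling of `λ`, whose whole content `λ` is added to every prefix of `B^u`). -/
def StarYam (B : RevBarredTableau d μ) (lam : Fin d → ℕ) : Prop :=
  ∀ a ∈ cells d μ, ¬ B.barred a → ∀ k : ℕ, 1 ≤ k →
    vecAt lam (k + 1) + B.countUpTo a (k + 1) ≤ vecAt lam k + B.countUpTo a k

end RevBarredTableau

/-! ### Reverse hatted tableaux -/

/-- A hat decoration: none, left hat, or right hat. -/
inductive Hat where
  | unhatted : Hat
  | left : Hat
  | right : Hat
deriving DecidableEq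

/-- A reverse hatted tableau of shape `μ`. -/
structure RevHattedTableau (d : ℕ) (μ : Fin d → ℕ) where
  val : ℕ × ℕ → ℕ
  hat : ℕ × ℕ → Hat
  mem : ∀ a ∈ cells d μ, 1 ≤ val a ∧ val a ≤ d
  zero : ∀ a ∉ cells d μ, val a = 0
  hat_out : ∀ a ∉ cells d μ, hat a = Hat.unhatted
  row : ∀ r c : ℕ, (r, c + 1) ∈ cells d μ → val (r, c + 1) ≤ val (r, c)
  col : ∀ r c : ℕ, (r + 1, c) ∈ cells d μ → val (r + 1, c) < val (r, c)

namespace RevHattedTableau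

variable {d : ℕ} {μ : Fin d → ℕ}

/-- `ω(H^u_{<a})_k`: content of the unhatted column word of `H` read before `a`. -/
def countBefore (H : RevHattedTableau d μ) (a : ℕ × ℕ) (k : ℕ) : ℕ :=
  ((cells d μ).filter fun b => H.hat b = Hat.unhatted ∧ H.val b = k ∧ revBefore a b).card

/-- `ω(H^u)_k`. -/
def content (H : RevHattedTableau d μ) (k : ℕ) : ℕ :=
  ((cells d μ).filter fun b => H.hat b = Hat.unhatted ∧ H.val b = k).card

/-- `e_{ξ,H}(a) = (ξ + ω(H^u_{<a}))_{|a|}`. -/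
def eIdx (H : RevHattedTableau d μ) (ξ : Fin d → ℕ) (a : ℕ × ℕ) : ℤ :=
  (vecAt ξ (H.val a) : ℤ) + (H.countBefore a (H.val a) : ℤ)

/-- `f_H(a) = |a|' + c(a) - r(a)`. -/
def fIdx (H : RevHattedTableau d μ) (a : ℕ × ℕ) : ℤ :=
  ((d : ℤ) + 1 - (H.val a : ℤ)) + (a.2 : ℤ) - (a.1 : ℤ)

/-- `d_{ξ,H} = ∏_{a ∈ H^l} y_{e_{ξ,H}(a)} · ∏_{a ∈ H^r} (-y_{f_H(a)})`. -/
def dWt (H : RevHattedTableau d μ) (ξ : Fin d → ℕ) : P d :=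
  (∏ a ∈ (cells d μ).filter (fun a => H.hat a = Hat.left), yI d (H.eIdx ξ a)) *
  ∏ a ∈ (cells d μ).filter (fun a => H.hat a = Hat.right), (-(yI d (H.fIdx a)))

end RevHattedTableau

/-- `H̄ = B`: `H` unbars to the reverse barred tableau `B`. -/
def UnbarsTo {d : ℕ} {μ : Fin d → ℕ} (H : RevHattedTableau d μ)
    (B : RevBarredTableau d μ) : Prop :=
  H.val = B.val ∧ ∀ a, (H.hat a ≠ Hat.unhatted ↔ B.barred a)

/-- The simple transposition `σ_i` on values: exchanges `i` and `i+1`. -/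
def swapVal (i v : ℕ) : ℕ := if v = i then i + 1 else if v = i + 1 then i else v

/-- The action of `σ_i` on `ℕ^d` by permuting coordinates. -/
def swapVec {d : ℕ} (i : ℕ) (ξ : Fin d → ℕ) : Fin d → ℕ :=
  fun j => vecAt ξ (swapVal i ((j : ℕ) + 1))

/-! ### Reverse (barred) subtableaux -/

/-- A reverse subtableau of shape `μ`: each cell is empty (value `0`) or carries a value
in `{1,…,d}`; no row or column conditions. -/
structure RevSubTableau (d : ℕ) (μ : Fin d → ℕ) where
  val : ℕ × ℕ → ℕ
  mem : ∀ a ∈ cells d μ, val a ≤ d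
  zero : ∀ a ∉ cells d μ, val a = 0

/-- A reverse barred subtableau of shape `μ`: a reverse subtableau some of whose filled
cells are barred. -/
structure RevBarredSubTableau (d : ℕ) (μ : Fin d → ℕ) where
  val : ℕ × ℕ → ℕ
  barred : ℕ × ℕ → Prop
  mem : ∀ a ∈ cells d μ, val a ≤ d
  zero : ∀ a ∉ cells d μ, val a = 0
  barred_filled : ∀ a, barred a → a ∈ cells d μ ∧ val a ≠ 0

/-- `(x|y)^R` for a reverse subtableau `R`. -/
def RevSubTableau.xyProd {d : ℕ} {μ : Fin d → ℕ} (R : RevSubTableau d μ) : P d :=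
  ∏ a ∈ (cells d μ).filter (fun a => R.val a ≠ 0), factor d (R.val a) a

namespace RevBarredSubTableau

variable {d : ℕ} {μ : Fin d → ℕ}

/-- `ω(B^u_{<a})_k`: unbarred filled entries of value `k` read before `a`. -/
def countBefore (B : RevBarredSubTableau d μ) (a : ℕ × ℕ) (k : ℕ) : ℕ :=
  ((cells d μ).filter fun b => ¬ B.barred b ∧ B.val b = k ∧ revBefore a b).card

/-- `ω(B^u)_k`. -/
def content (B : RevBarredSubTableau d μ) (k : ℕ) : ℕ :=
  ((cells d μ).filter fun b => ¬ B.barred b ∧ B.val b = k).card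

/-- `e_{ξ,B}(a) = (ξ + ω(B^u_{<a}))_{|a|}`. -/
def eIdx (B : RevBarredSubTableau d μ) (ξ : Fin d → ℕ) (a : ℕ × ℕ) : ℤ :=
  (vecAt ξ (B.val a) : ℤ) + (B.countBefore a (B.val a) : ℤ)

/-- `f_B(a) = |a|' + c(a) - r(a)`. -/
def fIdx (B : RevBarredSubTableau d μ) (a : ℕ × ℕ) : ℤ :=
  ((d : ℤ) + 1 - (B.val a : ℤ)) + (a.2 : ℤ) - (a.1 : ℤ)

/-- `c_{ξ,B}`. -/
def cXi (B : RevBarredSubTableau d μ) (ξ : Fin d → ℕ) : P d :=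
  ∏ a ∈ (cells d μ).filter (fun a => B.barred a), (yI d (B.eIdx ξ a) - yI d (B.fIdx a))

end RevBarredSubTableau

end EqLR

namespace EqLR

/-!
Multiplying `(x|y)^η` by a single factor `x_v - w` gives
`(x|y)^η (x_v - w) = (x|y)^{η + e_v} + (y_{η_v + 1} - w) (x|y)^η`, since
`(x_v|y)^{η_v + 1} = (x_v|y)^{η_v} (x_v - y_{η_v + 1})`. Multiply the factors of `(x|y)^R` into
`(x|y)^ξ` one cell at a time, in column-word order, and at each cell keep the first term
(the cell stays unbarred and its value joins the exponent) or the second one (the cell is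
barred). When a barred cell `a` is reached the exponent is `ξ` plus the content of the unbarred
cells read before `a`, which is exactly the factor of `c_{ξ+1,B}` at `a`.
-/

open Finset

theorem ffPow_succ (d : ℕ) (j : Fin d) (k : ℕ) :
    ffPow d j (k + 1) = ffPow d j k * (X (Sum.inl j) - yI d ((k : ℤ) + 1)) :=
  prod_range_succ _ _

theorem xyPow_add_single {d : ℕ} (ξ : Fin d → ℕ) (j : Fin d) :
    xyPow d (ξ + Pi.single j 1) = xyPow d ξ * (X (Sum.inl j) - yI d ((ξ j : ℤ) + 1)) := by
  unfold xyPow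
  rw [← mul_prod_erase _ _ (mem_univ j),
    ← mul_prod_erase _ (fun i => ffPow d i (ξ i)) (mem_univ j),
    prod_congr rfl fun i hi => by
      rw [Pi.add_apply, Pi.single_eq_of_ne (ne_of_mem_erase hi), add_zero]]
  simp only [Pi.add_apply, Pi.single_eq_same, ffPow_succ]
  ring

theorem vecAt_succ {d : ℕ} (ξ : Fin d → ℕ) (j : Fin d) : vecAt ξ ((j : ℕ) + 1) = ξ j := by
  simp [vecAt]

theorem xv_succ (d : ℕ) (j : Fin d) : xv d ((j : ℕ) + 1) = X (Sum.inl j) := by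
  simp [xv]

theorem exists_fin_succ_eq {d k : ℕ} (hk : k ∈ Set.Icc 1 d) : ∃ j : Fin d, (j : ℕ) + 1 = k :=
  ⟨⟨k - 1, by grind⟩, by grind⟩

theorem xyPow_mul_xv_sub {d k : ℕ} (ξ : Fin d → ℕ) (hk : k ∈ Set.Icc 1 d) (w : P d) :
    xyPow d ξ * (xv d k - w) =
      xyPow d (fun j => ξ j + if k = (j : ℕ) + 1 then 1 else 0) +
        (yI d (vecAt (fun j => ξ j + 1) k) - w) * xyPow d ξ := by
  obtain ⟨j, rfl⟩ := exists_fin_succ_eq hk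
  have hsingle : (fun i : Fin d => ξ i + if (j : ℕ) + 1 = (i : ℕ) + 1 then 1 else 0) =
      ξ + Pi.single j 1 := by
    funext i
    simp [Pi.single_apply, Fin.ext_iff, eq_comm]
  rw [hsingle, xyPow_add_single, vecAt_succ, xv_succ]
  push_cast
  ring

/-- Cells are read in increasing order of `κ`; `S` is the set of barred cells. -/
theorem xyPow_mul_prod_xv_sub {d : ℕ} {α β : Type*} [DecidableEq α] [LinearOrder β]
    (ξ : Fin d → ℕ) (κ : α → β) (hκ : κ.Injective) (v : α → ℕ) (w : α → P d) (F : Finset α)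
    (hv : ∀ a ∈ F, v a ∈ Set.Icc 1 d) :
    xyPow d ξ * ∏ a ∈ F, (xv d (v a) - w a) =
      ∑ S ∈ F.powerset,
        (∏ a ∈ S, (yI d ((vecAt (fun j => ξ j + 1) (v a) : ℤ) +
            (#{b ∈ F \ S | v b = v a ∧ κ b < κ a} : ℤ)) - w a)) *
          xyPow d (fun j => ξ j + #{b ∈ F \ S | v b = (j : ℕ) + 1}) := by
  induction F using induction_on_max_value κ with
  | empty => simp
  | insert c G hcG hmax ih =>
  have hlt : ∀ b ∈ G, κ b < κ c := fun b hb =>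
    (hmax b hb).lt_of_ne (hκ.ne (ne_of_mem_of_not_mem hb hcG))
  have hvc := hv c (mem_insert_self c G)
  obtain ⟨j, hj⟩ := exists_fin_succ_eq hvc
  rw [prod_insert hcG, mul_left_comm, ih fun a ha => hv a (mem_insert_of_mem ha), mul_sum,
    sum_powerset_insert hcG, ← sum_add_distrib]
  refine sum_congr rfl fun S hS => ?_
  have hcS : c ∉ S := fun h => hcG (mem_powerset.mp hS h)
  have hcGS : c ∉ G \ S := fun h => hcG (sdiff_subset h)
  have hunbarred : insert c G \ S = insert c (G \ S) := insert_sdiff_of_notMem _ hcS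
  have hbarred : insert c G \ insert c S = G \ S := by
    rw [insert_sdiff_insert, sdiff_insert_of_notMem hcG]
  rw [mul_comm (xv d (v c) - w c), mul_assoc, xyPow_mul_xv_sub _ hvc, mul_add, hunbarred,
    hbarred, prod_insert hcS]
  have hcoef_unbarred : ∀ a ∈ S, #{b ∈ insert c (G \ S) | v b = v a ∧ κ b < κ a} =
      #{b ∈ G \ S | v b = v a ∧ κ b < κ a} := fun a ha => by
    rw [filter_insert, if_neg fun h => (hlt a (mem_powerset.mp hS ha)).not_gt h.2]
  have hcoef_barred : (vecAt (fun i => ξ i + #{b ∈ G \ S | v b = (i : ℕ) + 1} + 1) (v c) : ℤ) =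
      (vecAt (fun i => ξ i + 1) (v c) : ℤ) + #{b ∈ G \ S | v b = v c ∧ κ b < κ c} := by
    rw [filter_congr fun b hb => and_iff_left (hlt b (sdiff_subset hb)), ← hj,
      vecAt_succ, vecAt_succ]
    push_cast
    ring
  have hcontent : (fun i : Fin d => ξ i + #{b ∈ insert c (G \ S) | v b = (i : ℕ) + 1}) =
      fun i => ξ i + #{b ∈ G \ S | v b = (i : ℕ) + 1} + if v c = (i : ℕ) + 1 then 1 else 0 := by
    funext i
    rw [filter_insert]
    split_ifs
    · rw [card_insert_of_notMem fun h => hcGS (filter_subset _ _ h), add_assoc]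
    · rfl
  rw [hcontent, hcoef_barred]
  conv_rhs => rw [prod_congr rfl fun a ha => by rw [hcoef_unbarred a ha]]
  ring

def readKey (a : ℕ × ℕ) : ℕ ×ₗ ℕᵒᵈ := toLex (a.2, OrderDual.toDual a.1)

theorem readKey_injective : Function.Injective readKey := fun a b h => by
  simp only [readKey, toLex_inj, Prod.mk.injEq, OrderDual.toDual_inj] at h
  exact Prod.ext h.2 h.1

theorem revBefore_iff_readKey_lt {a b : ℕ × ℕ} : revBefore a b ↔ readKey b < readKey a := by
  simp [revBefore, readKey, Prod.Lex.toLex_lt_toLex, eq_comm]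

theorem RevBarredSubTableau.ext {d : ℕ} {μ : Fin d → ℕ} {B₁ B₂ : RevBarredSubTableau d μ}
    (hval : B₁.val = B₂.val) (hbarred : B₁.barred = B₂.barred) : B₁ = B₂ := by
  cases B₁
  cases B₂
  subst hval hbarred
  rfl

namespace RevSubTableau

variable {d : ℕ} {μ : Fin d → ℕ} (R : RevSubTableau d μ)

def filled : Finset (ℕ × ℕ) := {a ∈ cells d μ | R.val a ≠ 0}

theorem mem_filled {a : ℕ × ℕ} : a ∈ R.filled ↔ a ∈ cells d μ ∧ R.val a ≠ 0 :=
  mem_filter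

theorem val_mem_Icc_of_mem_filled {a : ℕ × ℕ} (ha : a ∈ R.filled) : R.val a ∈ Set.Icc 1 d :=
  ⟨Nat.one_le_iff_ne_zero.mpr (R.mem_filled.mp ha).2, R.mem a (R.mem_filled.mp ha).1⟩

theorem xyProd_eq_prod_filled : R.xyProd = ∏ a ∈ R.filled, factor d (R.val a) a := rfl

def barOn (S : Finset (ℕ × ℕ)) : RevBarredSubTableau d μ where
  val := R.val
  barred a := a ∈ S ∧ a ∈ R.filled
  mem := R.mem
  zero := R.zero
  barred_filled _ ha := R.mem_filled.mp ha.2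

theorem barOn_val (S : Finset (ℕ × ℕ)) : (R.barOn S).val = R.val := rfl

theorem filter_barred_barOn {S : Finset (ℕ × ℕ)} (hS : S ⊆ R.filled) :
    {a ∈ cells d μ | (R.barOn S).barred a} = S := by
  ext a
  rw [mem_filter]
  exact ⟨fun h => h.2.1, fun h => ⟨(R.mem_filled.mp (hS h)).1, h, hS h⟩⟩

theorem barOn_injOn : Set.InjOn R.barOn R.filled.powerset := fun S hS T hT hST => by
  rw [← R.filter_barred_barOn (mem_powerset.mp hS), ← R.filter_barred_barOn (mem_powerset.mp hT),
    hST]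

theorem image_barOn_powerset :
    R.barOn '' R.filled.powerset = {B : RevBarredSubTableau d μ | B.val = R.val} := by
  ext B
  constructor
  · rintro ⟨S, -, rfl⟩
    rfl
  · intro hB
    refine ⟨{a ∈ R.filled | B.barred a}, mem_powerset.mpr (filter_subset _ _),
      RevBarredSubTableau.ext hB.symm ?_⟩
    funext a
    have := B.barred_filled a
    simp only [barOn, mem_filter, eq_iff_iff, mem_filled, ← show B.val = R.val from hB]
    tauto

theorem filter_unbarred_barOn (S : Finset (ℕ × ℕ)) {k : ℕ} (hk : k ≠ 0) :
    {b ∈ cells d μ | ¬ (R.barOn S).barred b ∧ (R.barOn S).val b = k} =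
      {b ∈ R.filled \ S | R.val b = k} := by
  ext b
  simp only [barOn, mem_filter, mem_sdiff, mem_filled]
  constructor
  · rintro ⟨hb, hS, rfl⟩
    tauto
  · rintro ⟨⟨⟨hb, -⟩, hS⟩, rfl⟩
    tauto

theorem content_barOn (S : Finset (ℕ × ℕ)) {k : ℕ} (hk : k ≠ 0) :
    (R.barOn S).content k = #{b ∈ R.filled \ S | R.val b = k} := by
  rw [RevBarredSubTableau.content, R.filter_unbarred_barOn S hk]

theorem countBefore_barOn (S : Finset (ℕ × ℕ)) (a : ℕ × ℕ) {k : ℕ} (hk : k ≠ 0) :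
    (R.barOn S).countBefore a k =
      #{b ∈ R.filled \ S | R.val b = k ∧ readKey b < readKey a} := by
  rw [RevBarredSubTableau.countBefore]
  simp only [← and_assoc]
  rw [← filter_filter, R.filter_unbarred_barOn S hk, filter_filter]
  simp only [revBefore_iff_readKey_lt]

theorem cXi_barOn (ξ : Fin d → ℕ) {S : Finset (ℕ × ℕ)} (hS : S ⊆ R.filled) :
    (R.barOn S).cXi (fun j => ξ j + 1) =
      ∏ a ∈ S, (yI d ((vecAt (fun j => ξ j + 1) (R.val a) : ℤ) +
        (#{b ∈ R.filled \ S | R.val b = R.val a ∧ readKey b < readKey a} : ℤ)) -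
          yI d ((d : ℤ) + 1 - (R.val a : ℤ) + (a.2 : ℤ) - (a.1 : ℤ))) := by
  rw [RevBarredSubTableau.cXi, R.filter_barred_barOn hS]
  refine prod_congr rfl fun a ha => ?_
  rw [RevBarredSubTableau.eIdx, barOn_val, R.countBefore_barOn S a (R.mem_filled.mp (hS ha)).2]
  rfl

end RevSubTableau

theorem expansion_lemma_general (d : ℕ) (μ : Fin d → ℕ)
    (ξ : Fin d → ℕ) (R : RevSubTableau d μ) :
    xyPow d ξ * R.xyProd =
      ∑ᶠ B ∈ {B : RevBarredSubTableau d μ | B.val = R.val},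
        B.cXi (fun j => ξ j + 1) *
          xyPow d (fun j => ξ j + B.content ((j : ℕ) + 1)) := by
  rw [← R.image_barOn_powerset, finsum_mem_image R.barOn_injOn, finsum_mem_coe_finset,
    R.xyProd_eq_prod_filled]
  simp only [factor]
  rw [xyPow_mul_prod_xv_sub ξ readKey readKey_injective _ _ _ fun a => R.val_mem_Icc_of_mem_filled]
  refine sum_congr rfl fun S hS => ?_
  rw [R.cXi_barOn ξ (mem_powerset.mp hS)]
  simp only [R.content_barOn S (Nat.succ_ne_zero _)]

/-- Expansion lemma: for a reverse subtableau `R` of shape `μ` and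
`ξ ∈ ℕ^d`, `(x|y)^ξ · (x|y)^R = Σ_B c_{ξ+1,B} · (x|y)^{ξ+ω(B^u)}`, the sum over reverse
barred subtableaux `B` whose unbarring is `R`. -/
theorem expansion_lemma (d : ℕ) (hd : 1 ≤ d) (μ : Fin d → ℕ) (hμ : IsPartitionVec μ)
    (ξ : Fin d → ℕ) (R : RevSubTableau d μ) :
    xyPow d ξ * R.xyProd =
      ∑ᶠ B ∈ {B : RevBarredSubTableau d μ | B.val = R.val},
        B.cXi (fun j => ξ j + 1) *
          xyPow d (fun j => ξ j + B.content ((j : ℕ) + 1)) :=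
  expansion_lemma_general d μ ξ R

end EqLR
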